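/- For each fixed μ ≥ 1, the quantity C(n,μ) · (∏_{j=1}^{n-μ} Γ(j/2+1)Γ(j/2+μ)) / (∏_{j=1}^{n} Γ(j/2)Γ(j/2+1)) grows like Θ(n^{μ²/2}) as n → ∞, where C(n,μ) is the binomial coefficient. -/

import Mathlib

open Finset Filter Real

/-!
With `G j = Γ (j / 2)` the products telescope: for `n ≥ μ` the quantity is `C(n, μ)` times
`∏_{k=1}^{μ} Γ ((n + k) / 2) / Γ ((n - μ + 2 + k) / 2)`, divided by the constant
`∏_{j=1}^{2μ} Γ (j / 2)`. Log-convexity of `Γ` gives Wendel's inequalities, hence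
`Γ (x + a) / Γ (x + b) = Θ(x ^ (a - b))`; so each of the `μ` ratios is `Θ(n ^ ((μ - 2) / 2))`,
`C(n, μ) = Θ(n ^ μ)`, and the exponents add up to `μ + μ (μ - 2) / 2 = μ² / 2`.
-/

open Asymptotics

theorem Asymptotics.IsTheta.comp_tendsto {α β E F : Type*} [Norm E] [Norm F] {l : Filter α}
    {f : α → E} {g : α → F} (h : f =Θ[l] g) {k : β → α} {l' : Filter β}
    (hk : Tendsto k l' l) : (f ∘ k) =Θ[l'] (g ∘ k) :=
  ⟨h.1.comp_tendsto hk, h.2.comp_tendsto hk⟩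

theorem Asymptotics.IsTheta.exists_pos_mul_le_and_le_mul {α : Type*} {l : Filter α}
    {f g : α → ℝ} (h : f =Θ[l] g) (hf : 0 ≤ᶠ[l] f) (hg : 0 ≤ᶠ[l] g) :
    ∃ c C : ℝ, 0 < c ∧ 0 < C ∧ ∀ᶠ x in l, c * g x ≤ f x ∧ f x ≤ C * g x := by
  obtain ⟨C, hC, hfg⟩ := h.isBigO.exists_pos
  obtain ⟨C', hC', hgf⟩ := h.isBigO_symm.exists_pos
  refine ⟨C'⁻¹, C, inv_pos.2 hC', hC, ?_⟩
  filter_upwards [hfg.bound, hgf.bound, hf, hg] with x hfgx hgfx hfx hgx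
  rw [norm_of_nonneg hfx, norm_of_nonneg hgx] at hfgx hgfx
  exact ⟨(inv_mul_le_iff₀ hC').2 hgfx, hfgx⟩

namespace Real

theorem Gamma_add_le_rpow_mul_Gamma {x s : ℝ} (hx : 0 < x) (hs₀ : 0 ≤ s) (hs₁ : s ≤ 1) :
    Gamma (x + s) ≤ x ^ s * Gamma x := by
  have hΓx := Gamma_pos_of_pos hx
  have hconv := convexOn_log_Gamma.2 (Set.mem_Ioi.2 hx)
    (Set.mem_Ioi.2 (by linarith : 0 < x + 1)) (sub_nonneg.2 hs₁) hs₀ (sub_add_cancel 1 s)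
  have harg : (1 - s) • x + s • (x + 1) = x + s := by simp only [smul_eq_mul]; ring
  rw [harg] at hconv
  simp only [Function.comp_apply, smul_eq_mul, Gamma_add_one hx.ne',
    log_mul hx.ne' hΓx.ne'] at hconv
  rw [← log_le_log_iff (Gamma_pos_of_pos (by linarith)) (by positivity),
    log_mul (by positivity) hΓx.ne', log_rpow hx]
  linarith

theorem isTheta_Gamma_add_div_Gamma_of_le_one {s : ℝ} (hs₀ : 0 ≤ s) (hs₁ : s ≤ 1) :
    (fun x => Gamma (x + s) / Gamma x) =Θ[atTop] fun x => x ^ s := by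
  refine ⟨IsBigO.of_bound 1 ?_, IsBigO.of_bound 2 ?_⟩ <;>
    filter_upwards [eventually_ge_atTop s, eventually_gt_atTop 0] with x hxs hx <;>
    have hΓx := Gamma_pos_of_pos hx <;>
    have hΓxs := Gamma_pos_of_pos (by linarith : 0 < x + s) <;>
    rw [norm_of_nonneg (by positivity), norm_of_nonneg (by positivity)]
  · rw [one_mul, div_le_iff₀ hΓx]
    exact Gamma_add_le_rpow_mul_Gamma hx hs₀ hs₁
  · -- the upper bound at `x + s`, exponent `1 - s`, bounds `Γ (x + 1) = x Γ x` by `Γ (x + s)`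
    have hstep := Gamma_add_le_rpow_mul_Gamma (by linarith : 0 < x + s) (sub_nonneg.2 hs₁)
      (by linarith : 1 - s ≤ 1)
    rw [add_add_sub_cancel, Gamma_add_one hx.ne'] at hstep
    have hpow : x ^ s * (x + s) ^ (1 - s) ≤ 2 * x := by
      calc x ^ s * (x + s) ^ (1 - s) ≤ x ^ s * (2 * x) ^ (1 - s) := by
            gcongr; linarith
        _ = 2 ^ (1 - s) * x := by
            rw [mul_rpow zero_le_two hx.le, mul_left_comm, ← rpow_add hx, add_sub_cancel,
              rpow_one]
        _ ≤ 2 * x := by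
            gcongr
            exact rpow_le_self_of_one_le one_le_two (by linarith)
    rw [mul_div_assoc', le_div_iff₀ hΓx]
    nlinarith [rpow_nonneg hx.le s]

theorem isTheta_Gamma_add_div_Gamma {s : ℝ} (hs : 0 ≤ s) :
    (fun x => Gamma (x + s) / Gamma x) =Θ[atTop] fun x => x ^ s := by
  obtain ⟨n, hn⟩ := exists_nat_ge s
  induction n generalizing s with
  | zero => exact isTheta_Gamma_add_div_Gamma_of_le_one hs (by push_cast at hn; linarith)
  | succ n ih =>
    rcases le_total s 1 with hs₁ | hs₁
    · exact isTheta_Gamma_add_div_Gamma_of_le_one hs hs₁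
    have hprev := ih (sub_nonneg.2 hs₁) (by push_cast at hn; linarith)
    have hlin : (fun x : ℝ => x + (s - 1)) =Θ[atTop] fun x => x :=
      (IsEquivalent.refl.add_const_of_norm_tendsto_atTop tendsto_norm_atTop_atTop).isTheta
    refine EventuallyEq.trans_isTheta ?_ ((hlin.mul hprev).trans_eventuallyEq ?_) <;>
      filter_upwards [eventually_gt_atTop 0] with x hx
    · rw [mul_div_assoc', ← Gamma_add_one (by linarith), add_assoc, sub_add_cancel]
    · rw [rpow_sub_one hx.ne', mul_div_cancel₀ _ hx.ne']

theorem isTheta_Gamma_add_div_Gamma_add (a b : ℝ) :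
    (fun x => Gamma (x + a) / Gamma (x + b)) =Θ[atTop] fun x => x ^ (a - b) := by
  wlog hab : b ≤ a generalizing a b
  · refine EventuallyEq.trans_isTheta ?_ ((this b a (by linarith)).inv.trans_eventuallyEq ?_)
    · exact Eventually.of_forall fun x => (inv_div _ _).symm
    · filter_upwards [eventually_gt_atTop 0] with x hx
      rw [← rpow_neg hx.le, neg_sub]
  have hshift : Tendsto (fun x : ℝ => x + b) atTop atTop :=
    tendsto_atTop_add_const_right _ b tendsto_id
  have hlin : (fun x : ℝ => x + b) =Θ[atTop] fun x => x :=
    (IsEquivalent.refl.add_const_of_norm_tendsto_atTop tendsto_norm_atTop_atTop).isTheta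
  have hpow := hlin.rpow (r := a - b) (hshift.eventually_ge_atTop 0) (eventually_ge_atTop 0)
  have h := isTheta_Gamma_add_div_Gamma (sub_nonneg.2 hab)
  refine EventuallyEq.trans_isTheta ?_ ((h.comp_tendsto hshift).trans hpow)
  exact Eventually.of_forall fun x => by simp only [Function.comp_apply, add_add_sub_cancel]

end Real

theorem Finset.prod_Icc_one_add {M : Type*} [CommMonoid M] (f : ℕ → M) (a b : ℕ) :
    ∏ j ∈ Icc 1 (a + b), f j = (∏ j ∈ Icc 1 a, f j) * ∏ k ∈ Icc 1 b, f (a + k) := by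
  induction b with
  | zero => simp
  | succ b ih =>
    rw [← add_assoc, prod_Icc_succ_top (by omega), ih, prod_Icc_succ_top (by omega), mul_assoc,
      add_assoc]

-- Both sides equal `(∏ j ∈ Icc 3 (m + μ + 2), G j) * ∏ j ∈ Icc 1 (m + 2 * μ), G j`.
theorem Finset.prod_Icc_one_mul_telescope {M : Type*} [CommMonoid M] (G : ℕ → M) (m μ : ℕ) :
    (∏ j ∈ Icc 1 m, G (j + 2) * G (j + 2 * μ)) * (∏ j ∈ Icc 1 (2 * μ), G j) *
        ∏ k ∈ Icc 1 μ, G (m + 2 + k) =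
      (∏ j ∈ Icc 1 (m + μ), G j * G (j + 2)) * ∏ k ∈ Icc 1 μ, G (m + μ + k) := by
  have hshift : ∏ j ∈ Icc 1 (m + μ), G (j + 2) =
      (∏ j ∈ Icc 1 m, G (j + 2)) * ∏ k ∈ Icc 1 μ, G (m + 2 + k) := by
    simp only [prod_Icc_one_add (fun j => G (j + 2)), add_right_comm]
  have hfull : (∏ j ∈ Icc 1 (2 * μ), G j) * ∏ j ∈ Icc 1 m, G (j + 2 * μ) =
      (∏ j ∈ Icc 1 (m + μ), G j) * ∏ k ∈ Icc 1 μ, G (m + μ + k) := by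
    simp only [← prod_Icc_one_add, add_comm _ (2 * μ)]
    ring_nf
  rw [prod_mul_distrib, prod_mul_distrib, hshift]
  calc _ = ((∏ j ∈ Icc 1 m, G (j + 2)) * ∏ k ∈ Icc 1 μ, G (m + 2 + k)) *
        ((∏ j ∈ Icc 1 (2 * μ), G j) * ∏ j ∈ Icc 1 m, G (j + 2 * μ)) := by ac_rfl
    _ = _ := by rw [hfull]; ac_rfl

noncomputable def corankVolumeFactor (μ n : ℕ) : ℝ :=
  (n.choose μ : ℝ) *
    (∏ j ∈ Icc 1 (n - μ), Gamma ((j : ℝ) / 2 + 1) * Gamma ((j : ℝ) / 2 + μ)) /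
    ∏ j ∈ Icc 1 n, Gamma ((j : ℝ) / 2) * Gamma ((j : ℝ) / 2 + 1)

theorem corankVolumeFactor_eq {μ n : ℕ} (h : μ ≤ n) :
    corankVolumeFactor μ n = (n.choose μ : ℝ) *
      (∏ k ∈ Icc 1 μ, Gamma (((n : ℝ) + k) / 2) / Gamma (((n : ℝ) + (k + 2 - μ)) / 2)) /
      ∏ j ∈ Icc 1 (2 * μ), Gamma ((j : ℝ) / 2) := by
  obtain ⟨m, rfl⟩ := Nat.exists_eq_add_of_le' h
  set G : ℕ → ℝ := fun j => Gamma ((j : ℝ) / 2)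
  have hG : ∀ j, 1 ≤ j → 0 < G j := fun j hj =>
    Gamma_pos_of_pos (div_pos (Nat.cast_pos.2 hj) two_pos)
  have hnum : ∏ j ∈ Icc 1 m, Gamma ((j : ℝ) / 2 + 1) * Gamma ((j : ℝ) / 2 + μ) =
      ∏ j ∈ Icc 1 m, G (j + 2) * G (j + 2 * μ) := by
    refine prod_congr rfl fun j _ => ?_
    simp only [G]; push_cast; ring_nf
  have hden : ∏ j ∈ Icc 1 (m + μ), Gamma ((j : ℝ) / 2) * Gamma ((j : ℝ) / 2 + 1) =
      ∏ j ∈ Icc 1 (m + μ), G j * G (j + 2) := by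
    refine prod_congr rfl fun j _ => ?_
    simp only [G]; push_cast; ring_nf
  have hratio : ∏ k ∈ Icc 1 μ,
        Gamma (((↑(m + μ) : ℝ) + k) / 2) / Gamma ((↑(m + μ) + (k + 2 - μ)) / 2) =
      (∏ k ∈ Icc 1 μ, G (m + μ + k)) / ∏ k ∈ Icc 1 μ, G (m + 2 + k) := by
    rw [← prod_div_distrib]
    refine prod_congr rfl fun k _ => ?_
    simp only [G]; push_cast; ring_nf
  have hK : 0 < ∏ j ∈ Icc 1 (2 * μ), G j := prod_pos fun j hj => hG j (mem_Icc.1 hj).1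
  have hP : 0 < ∏ k ∈ Icc 1 μ, G (m + 2 + k) := prod_pos fun k _ => hG _ (by omega)
  have hB : 0 < ∏ j ∈ Icc 1 (m + μ), G j * G (j + 2) :=
    prod_pos fun j hj => mul_pos (hG j (mem_Icc.1 hj).1) (hG _ (by omega))
  unfold corankVolumeFactor
  rw [Nat.add_sub_cancel, hnum, hden, hratio, mul_div_assoc, mul_div_assoc, div_div]
  congr 1
  rw [div_eq_div_iff hB.ne' (by positivity)]
  linear_combination prod_Icc_one_mul_telescope G m μ

theorem isTheta_Gamma_half_add_div_Gamma_half_add (a b : ℝ) :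
    (fun n : ℕ => Gamma (((n : ℝ) + a) / 2) / Gamma (((n : ℝ) + b) / 2)) =Θ[atTop]
      fun n => (n : ℝ) ^ ((a - b) / 2) := by
  have hhalf : Tendsto (fun n : ℕ => (n : ℝ) / 2) atTop atTop :=
    tendsto_natCast_atTop_atTop.atTop_div_const two_pos
  have h := (Real.isTheta_Gamma_add_div_Gamma_add (a / 2) (b / 2)).comp_tendsto hhalf
  refine EventuallyEq.trans_isTheta ?_ (h.trans_eventuallyEq ?_ |>.trans
    ((isTheta_const_mul_left (c := (2 : ℝ) ^ (-((a - b) / 2))) (by positivity)).2 isTheta_rfl))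
  · exact Eventually.of_forall fun n => by simp only [Function.comp_apply, add_div]
  · refine Eventually.of_forall fun n => ?_
    simp only [Function.comp_apply]
    rw [div_rpow (Nat.cast_nonneg n) zero_le_two, rpow_neg zero_le_two, ← sub_div,
      div_eq_inv_mul]

theorem isTheta_corankVolumeFactor (μ : ℕ) :
    (fun n => corankVolumeFactor μ n) =Θ[atTop]
      fun n => (n : ℝ) ^ (((μ ^ 2 : ℕ) : ℝ) / 2) := by
  have hfactor : ∀ k ∈ Icc 1 μ,
      (fun n : ℕ => Gamma (((n : ℝ) + k) / 2) / Gamma (((n : ℝ) + (k + 2 - μ)) / 2))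
        =Θ[atTop] fun n => (n : ℝ) ^ (((μ : ℝ) - 2) / 2) := fun k _ => by
    convert isTheta_Gamma_half_add_div_Gamma_half_add (k : ℝ) (k + 2 - μ) using 4
    ring
  have hK : (∏ j ∈ Icc 1 (2 * μ), Gamma ((j : ℝ) / 2)) ≠ 0 :=
    (prod_pos fun j hj => Gamma_pos_of_pos (div_pos (Nat.cast_pos.2 (mem_Icc.1 hj).1) two_pos)).ne'
  have h := ((isTheta_choose μ).mul (IsTheta.finsetProd hfactor)).div
    (isTheta_const_const hK one_ne_zero)
  refine EventuallyEq.trans_isTheta ?_ (h.trans_eventuallyEq ?_)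
  · filter_upwards [eventually_ge_atTop μ] with n hn
    rw [corankVolumeFactor_eq hn]
  · filter_upwards [eventually_gt_atTop 0] with n hn
    have hn' : (0 : ℝ) < n := Nat.cast_pos.2 hn
    rw [prod_const, Nat.card_Icc, Nat.add_sub_cancel, div_one, ← rpow_natCast, ← rpow_natCast,
      ← rpow_mul hn'.le, ← rpow_add hn']
    push_cast
    ring_nf

theorem real_volume_theta_general (μ : ℕ) :
    ∃ c C : ℝ, 0 < c ∧ 0 < C ∧
      ∀ᶠ n : ℕ in atTop,
        c * (n : ℝ) ^ (((μ ^ 2 : ℕ) : ℝ) / 2) ≤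
            (n.choose μ : ℝ) *
              (∏ j ∈ Finset.Icc 1 (n - μ),
                Real.Gamma ((j : ℝ) / 2 + 1) * Real.Gamma ((j : ℝ) / 2 + μ)) /
              (∏ j ∈ Finset.Icc 1 n,
                Real.Gamma ((j : ℝ) / 2) * Real.Gamma ((j : ℝ) / 2 + 1)) ∧
          (n.choose μ : ℝ) *
              (∏ j ∈ Finset.Icc 1 (n - μ),
                Real.Gamma ((j : ℝ) / 2 + 1) * Real.Gamma ((j : ℝ) / 2 + μ)) /
              (∏ j ∈ Finset.Icc 1 n,
                Real.Gamma ((j : ℝ) / 2) * Real.Gamma ((j : ℝ) / 2 + 1)) ≤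
            C * (n : ℝ) ^ (((μ ^ 2 : ℕ) : ℝ) / 2) :=
  (isTheta_corankVolumeFactor μ).exists_pos_mul_le_and_le_mul
    (Eventually.of_forall fun n => by unfold corankVolumeFactor; positivity)
    (Eventually.of_forall fun n => by positivity)

theorem real_volume_theta (μ : ℕ) (hμ : 1 ≤ μ) :
    ∃ c C : ℝ, 0 < c ∧ 0 < C ∧
      ∀ᶠ n : ℕ in atTop,
        c * (n : ℝ) ^ (((μ ^ 2 : ℕ) : ℝ) / 2) ≤
            (n.choose μ : ℝ) *
              (∏ j ∈ Finset.Icc 1 (n - μ),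
                Real.Gamma ((j : ℝ) / 2 + 1) * Real.Gamma ((j : ℝ) / 2 + μ)) /
              (∏ j ∈ Finset.Icc 1 n,
                Real.Gamma ((j : ℝ) / 2) * Real.Gamma ((j : ℝ) / 2 + 1)) ∧
          (n.choose μ : ℝ) *
              (∏ j ∈ Finset.Icc 1 (n - μ),
                Real.Gamma ((j : ℝ) / 2 + 1) * Real.Gamma ((j : ℝ) / 2 + μ)) /
              (∏ j ∈ Finset.Icc 1 n,
                Real.Gamma ((j : ℝ) / 2) * Real.Gamma ((j : ℝ) / 2 + 1)) ≤
            C * (n : ℝ) ^ (((μ ^ 2 : ℕ) : ℝ) / 2) :=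
  real_volume_theta_general μ
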